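/- Let k, m ∈ ℚ with k ≠ −1 and m ≠ −1, and let λₖ, λₘ, h ∈ ℝ. Let x : ℝ → ℝ be twice differentiable with x(t) > 0 for all t, and suppose x satisfies the second-order equation x''(t) = 8·(h − λₖ·x(t)^(2k) − λₘ·x(t)^(2m))·x(t) for all t, where real powers with rational exponents are interpreted via rpow. Then the function t ↦ (1/2)·x'(t)² + 4·x(t)²·( (λₖ/(k+1))·x(t)^(2k) + (λₘ/(m+1))·x(t)^(2m) − h ) is constant on ℝ. -/

import Mathlib

/-- The energy-type first integral of equation (eq:vhs0) of the paper:
if `x'' = 8(h − λₖ x^{2k} − λₘ x^{2m}) x`, then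
`I = (1/2)ẋ² + 4x²(λₖ x^{2k}/(k+1) + λₘ x^{2m}/(m+1) − h)` is constant. -/
theorem first_integral_vhs0 (k m : ℚ) (hk : k ≠ -1) (hm : m ≠ -1)
    (lk lm h : ℝ) (x x' : ℝ → ℝ)
    (hpos : ∀ t, 0 < x t)
    (hx : ∀ t, HasDerivAt x (x' t) t)
    (hx' : ∀ t, HasDerivAt x'
      (8 * (h - lk * x t ^ (2 * (k : ℝ)) - lm * x t ^ (2 * (m : ℝ))) * x t) t) :
    ∀ s t : ℝ,
      (1/2) * x' s ^ 2 + 4 * x s ^ 2 *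
        ((lk / ((k : ℝ) + 1)) * x s ^ (2 * (k : ℝ))
          + (lm / ((m : ℝ) + 1)) * x s ^ (2 * (m : ℝ)) - h)
      = (1/2) * x' t ^ 2 + 4 * x t ^ 2 *
        ((lk / ((k : ℝ) + 1)) * x t ^ (2 * (k : ℝ))
          + (lm / ((m : ℝ) + 1)) * x t ^ (2 * (m : ℝ)) - h) := by
  set I : ℝ → ℝ := fun t =>
    (1/2) * x' t ^ 2 + 4 * x t ^ 2 *
        ((lk / ((k : ℝ) + 1)) * x t ^ (2 * (k : ℝ))
          + (lm / ((m : ℝ) + 1)) * x t ^ (2 * (m : ℝ)) - h) with hI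
  have hk1 : (k : ℝ) + 1 ≠ 0 := by
    intro hcon
    apply hk
    have : (k : ℝ) = ((-1 : ℚ) : ℝ) := by push_cast; linarith
    exact_mod_cast this
  have hm1 : (m : ℝ) + 1 ≠ 0 := by
    intro hcon
    apply hm
    have : (m : ℝ) = ((-1 : ℚ) : ℝ) := by push_cast; linarith
    exact_mod_cast this
  have key : ∀ t : ℝ, HasDerivAt I 0 t := by
    intro t
    have hne : x t ≠ 0 := (hpos t).ne'
    have hk2 : HasDerivAt (fun t => x t ^ (2 * (k : ℝ)))
        (x' t * (2 * (k : ℝ)) * x t ^ (2 * (k : ℝ) - 1)) t :=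
      (hx t).rpow_const (Or.inl hne)
    have hm2 : HasDerivAt (fun t => x t ^ (2 * (m : ℝ)))
        (x' t * (2 * (m : ℝ)) * x t ^ (2 * (m : ℝ) - 1)) t :=
      (hx t).rpow_const (Or.inl hne)
    have hsq : HasDerivAt (fun t => x t ^ 2) (2 * x t ^ 1 * x' t) t := (hx t).pow 2
    have hq : HasDerivAt (fun t => (1/2) * x' t ^ 2)
        ((1/2) * (2 * x' t ^ 1 *
          (8 * (h - lk * x t ^ (2 * (k : ℝ)) - lm * x t ^ (2 * (m : ℝ))) * x t))) t :=
      ((hx' t).pow 2).const_mul _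
    have hG : HasDerivAt (fun t =>
        (lk / ((k : ℝ) + 1)) * x t ^ (2 * (k : ℝ))
          + (lm / ((m : ℝ) + 1)) * x t ^ (2 * (m : ℝ)) - h)
        ((lk / ((k : ℝ) + 1)) * (x' t * (2 * (k : ℝ)) * x t ^ (2 * (k : ℝ) - 1))
          + (lm / ((m : ℝ) + 1)) * (x' t * (2 * (m : ℝ)) * x t ^ (2 * (m : ℝ) - 1))) t :=
      ((hk2.const_mul _).add (hm2.const_mul _)).sub_const h
    have hP : HasDerivAt (fun t => 4 * x t ^ 2) (4 * (2 * x t ^ 1 * x' t)) t :=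
      hsq.const_mul 4
    have hprod := hP.mul hG
    have htot := hq.add hprod
    have hD : (1/2) * (2 * x' t ^ 1 *
          (8 * (h - lk * x t ^ (2 * (k : ℝ)) - lm * x t ^ (2 * (m : ℝ))) * x t))
        + (4 * (2 * x t ^ 1 * x' t) *
            ((lk / ((k : ℝ) + 1)) * x t ^ (2 * (k : ℝ))
              + (lm / ((m : ℝ) + 1)) * x t ^ (2 * (m : ℝ)) - h)
          + 4 * x t ^ 2 *
            ((lk / ((k : ℝ) + 1)) * (x' t * (2 * (k : ℝ)) * x t ^ (2 * (k : ℝ) - 1))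
              + (lm / ((m : ℝ) + 1)) * (x' t * (2 * (m : ℝ)) * x t ^ (2 * (m : ℝ) - 1))))
        = 0 := by
      have ek : x t ^ (2 * (k : ℝ) - 1) * x t = x t ^ (2 * (k : ℝ)) := by
        rw [← Real.rpow_add_one hne]; ring_nf
      have em : x t ^ (2 * (m : ℝ) - 1) * x t = x t ^ (2 * (m : ℝ)) := by
        rw [← Real.rpow_add_one hne]; ring_nf
      set p := x t
      set q := x' t
      set u := p ^ (2 * (k : ℝ))
      set v := p ^ (2 * (m : ℝ))
      set e := p ^ (2 * (k : ℝ) - 1)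
      set f := p ^ (2 * (m : ℝ) - 1)
      field_simp
      linear_combination (8 * (k : ℝ) * lk * q * ((m : ℝ) + 1) * p) * ek
        + (8 * (m : ℝ) * lm * q * ((k : ℝ) + 1) * p) * em
    rw [hD] at htot
    exact htot
  intro s t
  have hdiff : Differentiable ℝ I := fun t => (key t).differentiableAt
  have := is_const_of_deriv_eq_zero hdiff (fun t => (key t).deriv) s t
  simpa [hI] using this
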